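/- arXiv:2511.06079 — 3 statements merged into one kernel-verified Lean document; each statement's English description precedes it below -/
import Mathlib

section
/- Let S be a finite set and d ≥ 1. For each i,j ∈ S let ψ_{ij} : ℝ^d → ℝ^d be a C¹ diffeomorphism with ψ_{ii} = id, and let Q_{ij} : ℝ^d → [0,∞) be continuous with Q_{ii} = 0. For functions f : ℝ^d × S → ℝ define the regime-switching operator K f(x,i) := ∑_{j∈S} Q_{ij}(x) ( f(ψ_{ij}(x), j) − f(x,i) ) and the candidate adjoint K* f(x,i) := ∑_{j∈S} ( |det D(ψ_{ji}^{-1})(x)| · Q_{ji}(ψ_{ji}^{-1}(x)) · f(ψ_{ji}^{-1}(x), j) − Q_{ij}(x) f(x,i) ). Then for all f, g : ℝ^d × S → ℝ such that f(·,i) and g(·,i) are continuous with compact support for every i ∈ S, one has ∑_{i∈S} ∫_{ℝ^d} K f(x,i) g(x,i) dx = ∑_{i∈S} ∫_{ℝ^d} f(x,i) K* g(x,i) dx. -/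
open MeasureTheory

/-- ℝ^d -/
abbrev Euc (d : ℕ) := EuclideanSpace ℝ (Fin d)

/-- The regime-switching operator
K f(x,i) := ∑_j Q_{ij}(x) ( f(ψ_{ij}(x), j) − f(x,i) ). -/
noncomputable def Kop {d : ℕ} {S : Type*} [Fintype S]
    (ψ : S → S → Euc d → Euc d) (Q : S → S → Euc d → ℝ)
    (f : Euc d → S → ℝ) (x : Euc d) (i : S) : ℝ :=
  ∑ j, Q i j x * (f (ψ i j x) j - f x i)

/-- The candidate adjoint
K* f(x,i) := ∑_j ( |det D(ψ_{ji}⁻¹)(x)| Q_{ji}(ψ_{ji}⁻¹(x)) f(ψ_{ji}⁻¹(x), j)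
− Q_{ij}(x) f(x,i) ). -/
noncomputable def Kadj {d : ℕ} {S : Type*} [Fintype S]
    (ψinv : S → S → Euc d → Euc d) (Q : S → S → Euc d → ℝ)
    (f : Euc d → S → ℝ) (x : Euc d) (i : S) : ℝ :=
  ∑ j, (|(fderiv ℝ (ψinv j i) x).det| * Q j i (ψinv j i x) * f (ψinv j i x) j
      - Q i j x * f x i)

/-- Change of variables for a global C¹ diffeomorphism of ℝ^d. -/
lemma cov_aux {d : ℕ} (φinv : Euc d → Euc d) (hφinv : ContDiff ℝ 1 φinv)
    (hinj : Function.Injective φinv) (hsurj : Function.Surjective φinv)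
    (h : Euc d → ℝ) :
    (∫ x, |(fderiv ℝ φinv x).det| * h (φinv x)) = ∫ y, h y := by
  have key := integral_image_eq_integral_abs_det_fderiv_smul (μ := volume)
      MeasurableSet.univ
      (fun x _ => ((hφinv.differentiable one_ne_zero) x).hasFDerivAt.hasFDerivWithinAt)
      (hinj.injOn) h
  rw [Set.image_univ, hsurj.range_eq] at key
  simpa [smul_eq_mul] using key.symm

/-- K* is the adjoint of the regime-switching operator K with respect to
⟨f,g⟩ = ∑_i ∫ f(x,i) g(x,i) dx. -/
theorem regime_switch_adjoint
    {d : ℕ} {S : Type*} [Fintype S] [Nonempty S] (hd : 1 ≤ d)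
    (ψ ψinv : S → S → Euc d → Euc d)
    (hψ : ∀ i j, ContDiff ℝ 1 (ψ i j)) (hψinv : ∀ i j, ContDiff ℝ 1 (ψinv i j))
    (hleft : ∀ i j, Function.LeftInverse (ψinv i j) (ψ i j))
    (hright : ∀ i j, Function.RightInverse (ψinv i j) (ψ i j))
    (hψ_id : ∀ i (x : Euc d), ψ i i x = x)
    (Q : S → S → Euc d → ℝ)
    (hQ_cont : ∀ i j, Continuous (Q i j)) (hQ_nonneg : ∀ i j x, 0 ≤ Q i j x)
    (hQ_diag : ∀ i (x : Euc d), Q i i x = 0)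
    (f g : Euc d → S → ℝ)
    (hf_cont : ∀ i, Continuous fun x => f x i)
    (hf_supp : ∀ i, HasCompactSupport fun x => f x i)
    (hg_cont : ∀ i, Continuous fun x => g x i)
    (hg_supp : ∀ i, HasCompactSupport fun x => g x i) :
    ∑ i, ∫ x, Kop ψ Q f x i * g x i = ∑ i, ∫ x, f x i * Kadj ψinv Q g x i := by
  classical
  -- continuity of the Jacobian factor
  have hdet : ∀ i j : S, Continuous fun x => |(fderiv ℝ (ψinv i j) x).det| :=
    fun i j => (ContinuousLinearMap.continuous_det.comp
      ((hψinv i j).continuous_fderiv one_ne_zero)).abs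
  -- integrability helpers
  have hIntA : ∀ i j : S, Integrable (fun x => Q i j x * f (ψ i j x) j * g x i) := by
    intro i j
    exact (((hQ_cont i j).mul ((hf_cont j).comp (hψ i j).continuous)).mul
      (hg_cont i)).integrable_of_hasCompactSupport ((hg_supp i).mul_left)
  have hIntB : ∀ i j : S, Integrable (fun x => Q i j x * f x i * g x i) := by
    intro i j
    exact (((hQ_cont i j).mul (hf_cont i)).mul
      (hg_cont i)).integrable_of_hasCompactSupport ((hg_supp i).mul_left)
  have hIntC : ∀ i j : S, Integrable
      (fun x => f x i * (|(fderiv ℝ (ψinv j i) x).det| * Q j i (ψinv j i x)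
        * g (ψinv j i x) j)) := by
    intro i j
    have hc : Continuous fun x => f x i * (|(fderiv ℝ (ψinv j i) x).det|
        * Q j i (ψinv j i x) * g (ψinv j i x) j) :=
      (hf_cont i).mul (((hdet j i).mul
        ((hQ_cont j i).comp (hψinv j i).continuous)).mul
        ((hg_cont j).comp (hψinv j i).continuous))
    exact hc.integrable_of_hasCompactSupport ((hf_supp i).mul_right)
  -- Expand both sides into double sums of integrals.
  have hL : ∀ i : S, (∫ x, Kop ψ Q f x i * g x i)
      = ∑ j, ((∫ x, Q i j x * f (ψ i j x) j * g x i)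
          - ∫ x, Q i j x * f x i * g x i) := by
    intro i
    have : ∀ x : Euc d, Kop ψ Q f x i * g x i
        = ∑ j, (Q i j x * f (ψ i j x) j * g x i - Q i j x * f x i * g x i) := by
      intro x
      simp only [Kop, Finset.sum_mul]
      refine Finset.sum_congr rfl fun j _ => by ring
    simp_rw [this]
    rw [integral_finset_sum (μ := volume) Finset.univ
      (f := fun j (x : Euc d) => Q i j x * f (ψ i j x) j * g x i - Q i j x * f x i * g x i)
      (fun j _ => (hIntA i j).sub (hIntB i j))]
    exact Finset.sum_congr rfl fun j _ => integral_sub (hIntA i j) (hIntB i j)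
  have hR : ∀ i : S, (∫ x, f x i * Kadj ψinv Q g x i)
      = ∑ j, ((∫ x, f x i * (|(fderiv ℝ (ψinv j i) x).det| * Q j i (ψinv j i x)
            * g (ψinv j i x) j))
          - ∫ x, Q i j x * f x i * g x i) := by
    intro i
    have : ∀ x : Euc d, f x i * Kadj ψinv Q g x i
        = ∑ j, (f x i * (|(fderiv ℝ (ψinv j i) x).det| * Q j i (ψinv j i x)
            * g (ψinv j i x) j) - Q i j x * f x i * g x i) := by
      intro x
      simp only [Kadj, Finset.mul_sum]
      refine Finset.sum_congr rfl fun j _ => by ring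
    simp_rw [this]
    rw [integral_finset_sum (μ := volume) Finset.univ
      (f := fun j (x : Euc d) => f x i * (|(fderiv ℝ (ψinv j i) x).det| * Q j i (ψinv j i x)
        * g (ψinv j i x) j) - Q i j x * f x i * g x i)
      (fun j _ => (hIntC i j).sub (hIntB i j))]
    exact Finset.sum_congr rfl fun j _ => integral_sub (hIntC i j) (hIntB i j)
  -- change of variables in the C-terms
  have hC : ∀ i j : S, (∫ x, f x i * (|(fderiv ℝ (ψinv j i) x).det| * Q j i (ψinv j i x)
        * g (ψinv j i x) j))
      = ∫ y, Q j i y * f (ψ j i y) i * g y j := by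
    intro i j
    have key := cov_aux (ψinv j i) (hψinv j i) (hright j i).injective (hleft j i).surjective
      (fun y => Q j i y * f (ψ j i y) i * g y j)
    rw [← key]
    congr 1
    funext x
    rw [hright j i x]
    ring
  simp_rw [hL, hR, hC]
  have hsplit : ∀ (F G : S → S → ℝ),
      (∑ i, ∑ j, (F i j - G i j)) = (∑ i, ∑ j, F i j) - ∑ i, ∑ j, G i j := by
    intro F G
    simp [Finset.sum_sub_distrib]
  rw [hsplit, hsplit]
  congr 1
  exact Finset.sum_comm
end

section
/- Fix d, ℓ ≥ 1, a finite set S, and a point (t₀,x₀,i₀) ∈ (0,T) × ℝ^d × S. Let b ∈ ℝ^d, let σ be a real d×d matrix with a := σσᵀ, let ν be a Lévy measure on ℝ^ℓ (ν({0}) = 0 and ∫ (1 ∧ |z|²) ν(dz) < ∞), let γ : ℝ^ℓ → ℝ^d be measurable, and for each j ∈ S let Q_j ≥ 0 and ψ_j ∈ ℝ^d with ψ_{i₀} = x₀ and Q_{i₀} = 0. Let φ : (0,T) × ℝ^d × S → (0,∞) be positive, differentiable in t and twice differentiable in x at (t₀,x₀,i₀), and assume that the functions z ↦ φ(t₀,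 x₀+γ(z), i₀) − φ(t₀,x₀,i₀) − 1_{|z|≤1} γ(z)·∇φ(t₀,x₀,i₀) and z ↦ log φ(t₀, x₀+γ(z), i₀) − log φ(t₀,x₀,i₀) − 1_{|z|≤1} γ(z)·∇(log φ)(t₀,x₀,i₀) are ν-integrable, so that both Lφ(t₀,x₀,i₀) and L(log φ)(t₀,x₀,i₀) are well defined, where for a function h the operator L is Lh(t₀,x₀,i₀) := b·∇h + (1/2)∑_{m,n} a_{mn} ∂²h/∂x_m∂x_n + ∫_{ℝ^ℓ} [ h(t₀, x₀+γ(z), i₀) − h(t₀,x₀,i₀) − 1_{|z|≤1} γ(z)·∇h ] ν(dz) + ∑_{j∈S} Q_j ( h(t₀,ψ_j,j) − h(t₀,x₀,i₀) ) (all spatial derivatives evaluated at (t₀,x₀,i₀)). If (∂_t φ + Lφ)(t₀,x₀,i₀) = 0, then (∂_t + L)(log φ)(t₀,x₀,i₀) = −(1/2)|σᵀ ∇ log φ(t₀,x₀,i₀)|² + ∫_{ℝ^ℓ} [ log( φ(t₀,x₀+γ(z),i₀)/φ(t₀,x₀,i₀) ) − ( φ(t₀,x₀+γ(z),i₀) −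 φ(t₀,x₀,i₀) )/φ(t₀,x₀,i₀) ] ν(dz) + ∑_{j∈S} Q_j [ log( φ(t₀,ψ_j,j)/φ(t₀,x₀,i₀) ) − ( φ(t₀,ψ_j,j) − φ(t₀,x₀,i₀) )/φ(t₀,x₀,i₀) ]. -/
open MeasureTheory Matrix
open scoped ENNReal

/-- The pointwise integro-differential generator of a regime-switching jump diffusion
with drift b, diffusion matrix a, Lévy intensity ν with jump coefficient γ,
regime-switching rates Q_j and hybrid-jump targets ψ_j, evaluated at (t₀,x₀,i₀). -/
noncomputable def Lgen {d l : ℕ} {S : Type*} [Fintype S]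
    (b : Fin d → ℝ) (a : Matrix (Fin d) (Fin d) ℝ)
    (ν : Measure (Euc l)) (γ : Euc l → Euc d)
    (Q : S → ℝ) (ψ : S → Euc d)
    (t₀ : ℝ) (x₀ : Euc d) (i₀ : S)
    (h : ℝ → Euc d → S → ℝ) : ℝ :=
  (∑ m, b m * fderiv ℝ (fun x => h t₀ x i₀) x₀ (EuclideanSpace.single m 1))
  + (1 / 2) * ∑ m, ∑ n, a m n *
      fderiv ℝ (fun x =>
        fderiv ℝ (fun x' => h t₀ x' i₀) x (EuclideanSpace.single n 1)) x₀
        (EuclideanSpace.single m 1)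
  + (∫ z, (h t₀ (x₀ + γ z) i₀ - h t₀ x₀ i₀ -
      (if ‖z‖ ≤ 1 then
        ∑ m, γ z m * fderiv ℝ (fun x => h t₀ x i₀) x₀ (EuclideanSpace.single m 1)
      else 0)) ∂ν)
  + ∑ j, Q j * (h t₀ (ψ j) j - h t₀ x₀ i₀)

/-- the key identity for (∂_t + L)(log φ) at a point, under the
harmonicity hypothesis (∂_t φ + Lφ)(t₀,x₀,i₀) = 0. -/
theorem generator_log_identity
    {d l : ℕ} {S : Type*} [Fintype S] [Nonempty S]
    (T : ℝ) (hT : 0 < T)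
    (t₀ : ℝ) (x₀ : Euc d) (i₀ : S) (ht₀ : t₀ ∈ Set.Ioo 0 T)
    (b : Fin d → ℝ) (σ : Matrix (Fin d) (Fin d) ℝ)
    (a : Matrix (Fin d) (Fin d) ℝ) (ha : a = σ * σᵀ)
    -- ν is a Lévy measure on ℝ^ℓ
    (ν : Measure (Euc l)) (hν0 : ν {0} = 0)
    (hν_levy : ∫⁻ z, ENNReal.ofReal (min 1 (‖z‖ ^ 2)) ∂ν ≠ ∞)
    (γ : Euc l → Euc d) (hγ_meas : Measurable γ)
    (Q : S → ℝ) (hQ_nonneg : ∀ j, 0 ≤ Q j)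
    (ψ : S → Euc d) (hψ_diag : ψ i₀ = x₀) (hQ_diag : Q i₀ = 0)
    -- φ : (0,T) × ℝ^d × S → (0,∞)
    (φ : ℝ → Euc d → S → ℝ)
    (hφ_pos : ∀ t ∈ Set.Ioo 0 T, ∀ (x : Euc d) (i : S), 0 < φ t x i)
    -- φ differentiable in t and twice differentiable in x at (t₀,x₀,i₀)
    (hφ_t : DifferentiableAt ℝ (fun t => φ t x₀ i₀) t₀)
    (hφ_x : DifferentiableAt ℝ (fun x => φ t₀ x i₀) x₀)
    (hφ_xx : DifferentiableAt ℝ (fderiv ℝ fun x => φ t₀ x i₀) x₀)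
    -- ν-integrability of the increment integrand for φ
    (hφ_int : Integrable (fun z =>
      φ t₀ (x₀ + γ z) i₀ - φ t₀ x₀ i₀ -
        (if ‖z‖ ≤ 1 then
          ∑ m, γ z m * fderiv ℝ (fun x => φ t₀ x i₀) x₀ (EuclideanSpace.single m 1)
        else 0)) ν)
    -- ν-integrability of the increment integrand for log φ
    (hlogφ_int : Integrable (fun z =>
      Real.log (φ t₀ (x₀ + γ z) i₀) - Real.log (φ t₀ x₀ i₀) -
        (if ‖z‖ ≤ 1 then
          ∑ m, γ z m *
            fderiv ℝ (fun x => Real.log (φ t₀ x i₀)) x₀ (EuclideanSpace.single m 1)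
        else 0)) ν)
    -- harmonicity: (∂_t φ + Lφ)(t₀,x₀,i₀) = 0
    (hharm : deriv (fun t => φ t x₀ i₀) t₀ + Lgen b a ν γ Q ψ t₀ x₀ i₀ φ = 0) :
    deriv (fun t => Real.log (φ t x₀ i₀)) t₀ +
      Lgen b a ν γ Q ψ t₀ x₀ i₀ (fun t x i => Real.log (φ t x i)) =
    -(1 / 2) * (∑ m, (∑ n, σ n m *
        fderiv ℝ (fun x => Real.log (φ t₀ x i₀)) x₀ (EuclideanSpace.single n 1)) ^ 2)
    + (∫ z, (Real.log (φ t₀ (x₀ + γ z) i₀ / φ t₀ x₀ i₀) -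
        (φ t₀ (x₀ + γ z) i₀ - φ t₀ x₀ i₀) / φ t₀ x₀ i₀) ∂ν)
    + ∑ j, Q j * (Real.log (φ t₀ (ψ j) j / φ t₀ x₀ i₀) -
        (φ t₀ (ψ j) j - φ t₀ x₀ i₀) / φ t₀ x₀ i₀) := by
  have hpos : ∀ (x : Euc d) (i : S), 0 < φ t₀ x i := fun x i => hφ_pos t₀ ht₀ x i
  have hc : (0:ℝ) < φ t₀ x₀ i₀ := hpos x₀ i₀
  have hcne : φ t₀ x₀ i₀ ≠ 0 := hc.ne'
  -- the fderiv of log ∘ φ as a function of x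
  have hlogfd : (fderiv ℝ (fun x => Real.log (φ t₀ x i₀)))
      = fun x => (φ t₀ x i₀)⁻¹ • fderiv ℝ (fun x' => φ t₀ x' i₀) x := by
    funext x
    by_cases hdx : DifferentiableAt ℝ (fun x' => φ t₀ x' i₀) x
    · exact (hdx.hasFDerivAt.log (hpos x i₀).ne').fderiv
    · have hnd : ¬ DifferentiableAt ℝ (fun x' => Real.log (φ t₀ x' i₀)) x := by
        intro hd
        apply hdx
        have hfun : (fun x' => φ t₀ x' i₀) = fun x' => Real.exp (Real.log (φ t₀ x' i₀)) := by
          funext x'; rw [Real.exp_log (hpos x' i₀)]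
        rw [hfun]
        exact hd.exp
      rw [fderiv_zero_of_not_differentiableAt hdx,
        fderiv_zero_of_not_differentiableAt hnd, smul_zero]
  have hDlog : ∀ m : Fin d,
      fderiv ℝ (fun x => Real.log (φ t₀ x i₀)) x₀ (EuclideanSpace.single m 1)
      = (φ t₀ x₀ i₀)⁻¹ *
          fderiv ℝ (fun x => φ t₀ x i₀) x₀ (EuclideanSpace.single m 1) := by
    intro m; rw [hlogfd]; simp
  -- second derivatives
  have h1 : ∀ n : Fin d, HasFDerivAt
      (fun x => fderiv ℝ (fun x' => φ t₀ x' i₀) x (EuclideanSpace.single n 1))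
      ((fderiv ℝ (fderiv ℝ fun x => φ t₀ x i₀) x₀).flip (EuclideanSpace.single n 1)) x₀ := by
    intro n
    simpa using hφ_xx.hasFDerivAt.clm_apply
      (hasFDerivAt_const (EuclideanSpace.single n 1 : Euc d) x₀)
  have hinv : HasFDerivAt (fun x => (φ t₀ x i₀)⁻¹)
      ((-(φ t₀ x₀ i₀ ^ 2)⁻¹) • fderiv ℝ (fun x => φ t₀ x i₀) x₀) x₀ :=
    (hasDerivAt_inv hcne).comp_hasFDerivAt x₀ hφ_x.hasFDerivAt
  have hHlog : ∀ m n : Fin d,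
      fderiv ℝ (fun x => fderiv ℝ (fun x' => Real.log (φ t₀ x' i₀)) x
          (EuclideanSpace.single n 1)) x₀ (EuclideanSpace.single m 1)
      = (φ t₀ x₀ i₀)⁻¹ * fderiv ℝ (fun x => fderiv ℝ (fun x' => φ t₀ x' i₀) x
          (EuclideanSpace.single n 1)) x₀ (EuclideanSpace.single m 1)
        - (φ t₀ x₀ i₀)⁻¹ * (φ t₀ x₀ i₀)⁻¹ *
            fderiv ℝ (fun x => φ t₀ x i₀) x₀ (EuclideanSpace.single m 1) *
            fderiv ℝ (fun x => φ t₀ x i₀) x₀ (EuclideanSpace.single n 1) := by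
    intro m n
    have e1 : (fun x => fderiv ℝ (fun x' => Real.log (φ t₀ x' i₀)) x
        (EuclideanSpace.single n 1))
        = fun x => (φ t₀ x i₀)⁻¹ *
            fderiv ℝ (fun x' => φ t₀ x' i₀) x (EuclideanSpace.single n 1) := by
      funext x; rw [hlogfd]; simp
    rw [e1, (show HasFDerivAt (fun x => (φ t₀ x i₀)⁻¹ *
        fderiv ℝ (fun x' => φ t₀ x' i₀) x (EuclideanSpace.single n 1)) _ x₀
        from hinv.mul (h1 n)).fderiv, (h1 n).fderiv]
    simp only [ContinuousLinearMap.add_apply, ContinuousLinearMap.smul_apply,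
      ContinuousLinearMap.flip_apply, smul_eq_mul]
    ring
  -- time derivative
  have hderivt : deriv (fun t => Real.log (φ t x₀ i₀)) t₀
      = deriv (fun t => φ t x₀ i₀) t₀ / φ t₀ x₀ i₀ :=
    (hφ_t.hasDerivAt.log hcne).deriv
  -- pointwise decomposition of the log jump integrand
  have hpt : ∀ z : Euc l,
      Real.log (φ t₀ (x₀ + γ z) i₀) - Real.log (φ t₀ x₀ i₀) -
        (if ‖z‖ ≤ 1 then ∑ m, γ z m * ((φ t₀ x₀ i₀)⁻¹ *
          fderiv ℝ (fun x => φ t₀ x i₀) x₀ (EuclideanSpace.single m 1)) else 0)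
      = (φ t₀ x₀ i₀)⁻¹ * (φ t₀ (x₀ + γ z) i₀ - φ t₀ x₀ i₀ -
          (if ‖z‖ ≤ 1 then ∑ m, γ z m *
            fderiv ℝ (fun x => φ t₀ x i₀) x₀ (EuclideanSpace.single m 1) else 0))
        + (Real.log (φ t₀ (x₀ + γ z) i₀ / φ t₀ x₀ i₀) -
            (φ t₀ (x₀ + γ z) i₀ - φ t₀ x₀ i₀) / φ t₀ x₀ i₀) := by
    intro z
    have hγsum : (if ‖z‖ ≤ 1 then ∑ m, γ z m * ((φ t₀ x₀ i₀)⁻¹ *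
        fderiv ℝ (fun x => φ t₀ x i₀) x₀ (EuclideanSpace.single m 1)) else 0)
        = (φ t₀ x₀ i₀)⁻¹ * (if ‖z‖ ≤ 1 then ∑ m, γ z m *
            fderiv ℝ (fun x => φ t₀ x i₀) x₀ (EuclideanSpace.single m 1) else 0) := by
      by_cases hz : ‖z‖ ≤ 1
      · simp only [hz, if_true, Finset.mul_sum]
        exact Finset.sum_congr rfl fun m _ => by ring
      · simp [hz]
    rw [hγsum, Real.log_div (hpos _ i₀).ne' hcne]
    field_simp
    ring
  -- integrability of the relative-entropy-type integrand
  have hK_int : Integrable (fun z =>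
      Real.log (φ t₀ (x₀ + γ z) i₀ / φ t₀ x₀ i₀) -
        (φ t₀ (x₀ + γ z) i₀ - φ t₀ x₀ i₀) / φ t₀ x₀ i₀) ν := by
    have h2 := hφ_int.const_mul ((φ t₀ x₀ i₀)⁻¹)
    have h1' := hlogφ_int
    simp only [hDlog] at h1'
    refine (h1'.sub h2).congr (Filter.Eventually.of_forall fun z => ?_)
    have := hpt z
    simp only [Pi.sub_apply]
    linarith
  -- splitting the log jump integral
  have hIint : (∫ z, (Real.log (φ t₀ (x₀ + γ z) i₀) - Real.log (φ t₀ x₀ i₀) -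
        (if ‖z‖ ≤ 1 then ∑ m, γ z m * ((φ t₀ x₀ i₀)⁻¹ *
          fderiv ℝ (fun x => φ t₀ x i₀) x₀ (EuclideanSpace.single m 1)) else 0)) ∂ν)
      = (φ t₀ x₀ i₀)⁻¹ * (∫ z, (φ t₀ (x₀ + γ z) i₀ - φ t₀ x₀ i₀ -
          (if ‖z‖ ≤ 1 then ∑ m, γ z m *
            fderiv ℝ (fun x => φ t₀ x i₀) x₀ (EuclideanSpace.single m 1) else 0)) ∂ν)
        + ∫ z, (Real.log (φ t₀ (x₀ + γ z) i₀ / φ t₀ x₀ i₀) -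
            (φ t₀ (x₀ + γ z) i₀ - φ t₀ x₀ i₀) / φ t₀ x₀ i₀) ∂ν := by
    rw [integral_congr_ae (Filter.Eventually.of_forall hpt)]
    rw [integral_add (hφ_int.const_mul _) hK_int, MeasureTheory.integral_const_mul]
  -- regime switching sum
  have hQtotal : ∑ j, Q j * (Real.log (φ t₀ (ψ j) j) - Real.log (φ t₀ x₀ i₀))
      = (φ t₀ x₀ i₀)⁻¹ * (∑ j, Q j * (φ t₀ (ψ j) j - φ t₀ x₀ i₀))
        + ∑ j, Q j * (Real.log (φ t₀ (ψ j) j / φ t₀ x₀ i₀) -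
            (φ t₀ (ψ j) j - φ t₀ x₀ i₀) / φ t₀ x₀ i₀) := by
    rw [Finset.mul_sum, ← Finset.sum_add_distrib]
    refine Finset.sum_congr rfl fun j _ => ?_
    rw [Real.log_div (hpos (ψ j) j).ne' hcne]
    field_simp
    ring
  -- first order sum
  have hbsum : ∑ m, b m * ((φ t₀ x₀ i₀)⁻¹ *
      fderiv ℝ (fun x => φ t₀ x i₀) x₀ (EuclideanSpace.single m 1))
      = (φ t₀ x₀ i₀)⁻¹ * ∑ m, b m *
          fderiv ℝ (fun x => φ t₀ x i₀) x₀ (EuclideanSpace.single m 1) := by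
    rw [Finset.mul_sum]; exact Finset.sum_congr rfl fun m _ => by ring
  -- second order sum
  have hasum : ∑ m, ∑ n, a m n *
      ((φ t₀ x₀ i₀)⁻¹ * fderiv ℝ (fun x => fderiv ℝ (fun x' => φ t₀ x' i₀) x
          (EuclideanSpace.single n 1)) x₀ (EuclideanSpace.single m 1)
        - (φ t₀ x₀ i₀)⁻¹ * (φ t₀ x₀ i₀)⁻¹ *
            fderiv ℝ (fun x => φ t₀ x i₀) x₀ (EuclideanSpace.single m 1) *
            fderiv ℝ (fun x => φ t₀ x i₀) x₀ (EuclideanSpace.single n 1))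
      = (φ t₀ x₀ i₀)⁻¹ * (∑ m, ∑ n, a m n *
          fderiv ℝ (fun x => fderiv ℝ (fun x' => φ t₀ x' i₀) x
            (EuclideanSpace.single n 1)) x₀ (EuclideanSpace.single m 1))
        - (φ t₀ x₀ i₀)⁻¹ * (φ t₀ x₀ i₀)⁻¹ * ∑ m, ∑ n, a m n *
            fderiv ℝ (fun x => φ t₀ x i₀) x₀ (EuclideanSpace.single m 1) *
            fderiv ℝ (fun x => φ t₀ x i₀) x₀ (EuclideanSpace.single n 1) := by
    rw [Finset.mul_sum, Finset.mul_sum, ← Finset.sum_sub_distrib]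
    refine Finset.sum_congr rfl fun m _ => ?_
    rw [Finset.mul_sum, Finset.mul_sum, ← Finset.sum_sub_distrib]
    exact Finset.sum_congr rfl fun n _ => by ring
  -- the quadratic form identity
  have hquad : ∑ m, ∑ n, a m n *
      fderiv ℝ (fun x => φ t₀ x i₀) x₀ (EuclideanSpace.single m 1) *
      fderiv ℝ (fun x => φ t₀ x i₀) x₀ (EuclideanSpace.single n 1)
      = ∑ m, (∑ n, σ n m *
          fderiv ℝ (fun x => φ t₀ x i₀) x₀ (EuclideanSpace.single n 1)) ^ 2 := by
    subst ha
    calc ∑ m, ∑ n, (σ * σᵀ) m n *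
        fderiv ℝ (fun x => φ t₀ x i₀) x₀ (EuclideanSpace.single m 1) *
        fderiv ℝ (fun x => φ t₀ x i₀) x₀ (EuclideanSpace.single n 1)
        = ∑ m, ∑ n, ∑ k,
            (σ m k * fderiv ℝ (fun x => φ t₀ x i₀) x₀ (EuclideanSpace.single m 1)) *
            (σ n k * fderiv ℝ (fun x => φ t₀ x i₀) x₀ (EuclideanSpace.single n 1)) := by
          refine Finset.sum_congr rfl fun m _ => Finset.sum_congr rfl fun n _ => ?_
          rw [Matrix.mul_apply, Finset.sum_mul, Finset.sum_mul]
          exact Finset.sum_congr rfl fun k _ => by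
            simp only [Matrix.transpose_apply]; ring
      _ = ∑ m, ∑ k, ∑ n,
            (σ m k * fderiv ℝ (fun x => φ t₀ x i₀) x₀ (EuclideanSpace.single m 1)) *
            (σ n k * fderiv ℝ (fun x => φ t₀ x i₀) x₀ (EuclideanSpace.single n 1)) :=
          Finset.sum_congr rfl fun m _ => Finset.sum_comm
      _ = ∑ k, ∑ m, ∑ n,
            (σ m k * fderiv ℝ (fun x => φ t₀ x i₀) x₀ (EuclideanSpace.single m 1)) *
            (σ n k * fderiv ℝ (fun x => φ t₀ x i₀) x₀ (EuclideanSpace.single n 1)) :=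
          Finset.sum_comm
      _ = ∑ k, (∑ n, σ n k *
            fderiv ℝ (fun x => φ t₀ x i₀) x₀ (EuclideanSpace.single n 1)) ^ 2 := by
          refine Finset.sum_congr rfl fun k _ => ?_
          rw [sq, Finset.sum_mul_sum]
  -- the RHS quadratic term rescaling
  have hrhs1 : ∑ m, (∑ n, σ n m * ((φ t₀ x₀ i₀)⁻¹ *
      fderiv ℝ (fun x => φ t₀ x i₀) x₀ (EuclideanSpace.single n 1))) ^ 2
      = (φ t₀ x₀ i₀)⁻¹ * (φ t₀ x₀ i₀)⁻¹ * ∑ m, (∑ n, σ n m *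
          fderiv ℝ (fun x => φ t₀ x i₀) x₀ (EuclideanSpace.single n 1)) ^ 2 := by
    rw [Finset.mul_sum]
    refine Finset.sum_congr rfl fun m _ => ?_
    have : ∑ n, σ n m * ((φ t₀ x₀ i₀)⁻¹ *
        fderiv ℝ (fun x => φ t₀ x i₀) x₀ (EuclideanSpace.single n 1))
        = (φ t₀ x₀ i₀)⁻¹ * ∑ n, σ n m *
            fderiv ℝ (fun x => φ t₀ x i₀) x₀ (EuclideanSpace.single n 1) := by
      rw [Finset.mul_sum]; exact Finset.sum_congr rfl fun n _ => by ring
    rw [this]; ring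
  -- assemble
  simp only [Lgen] at hharm ⊢
  rw [hderivt]
  simp only [hDlog, hHlog]
  rw [hbsum, hasum, hquad, hIint, hQtotal, hrhs1]
  linear_combination (φ t₀ x₀ i₀)⁻¹ * hharm
end

section
/- Let S be a finite set and p_{ij} : ℝ^d × ℝ^d → [0,∞) Borel measurable for i,j ∈ S, and let ρ₀, ρ_T : ℝ^d × S → [0,∞) be measurable. For h : ℝ^d × S → (0,∞) define D(h) := 1/h, E_{ρ_T}(h)(x,i) := ∑_{j∈S} ∫ p_{ij}(x,y) ρ_T(y,j) h(y,j) dy, E_{ρ₀}(h)(y,j) := ∑_{i∈S} ∫ p_{ij}(x,y) ρ₀(x,i) h(x,i) dx, and C := E_{ρ₀} ∘ D ∘ E_{ρ_T} ∘ D. Suppose φ⁰, φᵀ, φ̂⁰, φ̂ᵀ : ℝ^d × S → [0,∞) satisfy, for all x, y ∈ ℝ^d and i, j ∈ S: (1) φ⁰(x,i) = ∑_{j∈S} ∫ p_{ij}(x,y) φᵀ(y,j) dy; (2) φ̂ᵀ(y,j) = ∑_{i∈S} ∫ p_{ij}(x,y) φ̂⁰(x,i) dx; (3) ρ₀(x,i)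 = φ⁰(x,i) φ̂⁰(x,i); (4) ρ_T(y,j) = φᵀ(y,j) φ̂ᵀ(y,j); and suppose φ⁰ and φ̂ᵀ take values in (0,∞) everywhere. Then C(φ̂ᵀ) = φ̂ᵀ, i.e. φ̂ᵀ is a fixed point of the Fortet–Sinkhorn map C. Moreover, along the chain one has E_{ρ_T}(D(φ̂ᵀ)) = φ⁰. -/
open MeasureTheory
open scoped ENNReal

/-- The inversion map D(h) := 1/h. -/
noncomputable def Dmap {d : ℕ} {S : Type*}
    (h : Euc d → S → ℝ≥0∞) : Euc d → S → ℝ≥0∞ :=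
  fun x i => (h x i)⁻¹

/-- E_{ρ_T}(h)(x,i) := ∑_j ∫ p_{ij}(x,y) ρ_T(y,j) h(y,j) dy. -/
noncomputable def ETmap {d : ℕ} {S : Type*} [Fintype S]
    (p : S → S → Euc d → Euc d → ℝ≥0∞) (ρT : Euc d → S → ℝ≥0∞)
    (h : Euc d → S → ℝ≥0∞) : Euc d → S → ℝ≥0∞ :=
  fun x i => ∑ j, ∫⁻ y, p i j x y * ρT y j * h y j ∂volume

/-- E_{ρ₀}(h)(y,j) := ∑_i ∫ p_{ij}(x,y) ρ₀(x,i) h(x,i) dx. -/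
noncomputable def E0map {d : ℕ} {S : Type*} [Fintype S]
    (p : S → S → Euc d → Euc d → ℝ≥0∞) (ρ0 : Euc d → S → ℝ≥0∞)
    (h : Euc d → S → ℝ≥0∞) : Euc d → S → ℝ≥0∞ :=
  fun y j => ∑ i, ∫⁻ x, p i j x y * ρ0 x i * h x i ∂volume

/-- The Fortet–Sinkhorn map C := E_{ρ₀} ∘ D ∘ E_{ρ_T} ∘ D. -/
noncomputable def Cmap {d : ℕ} {S : Type*} [Fintype S]
    (p : S → S → Euc d → Euc d → ℝ≥0∞) (ρ0 ρT : Euc d → S → ℝ≥0∞)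
    (h : Euc d → S → ℝ≥0∞) : Euc d → S → ℝ≥0∞ :=
  E0map p ρ0 (Dmap (ETmap p ρT (Dmap h)))

/-- a solution of the (φ,φ̂)-Schrödinger system gives a fixed point of
the Fortet–Sinkhorn map C, and along the chain E_{ρ_T}(D(φ̂ᵀ)) = φ⁰. -/
theorem sinkhorn_fixed_point
    {d : ℕ} {S : Type*} [Fintype S] [Nonempty S]
    (p : S → S → Euc d → Euc d → ℝ≥0∞)
    (hp_meas : ∀ i j, Measurable fun a : Euc d × Euc d => p i j a.1 a.2)
    (hp_fin : ∀ i j x y, p i j x y ≠ ∞)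
    (ρ0 ρT : Euc d → S → ℝ≥0∞)
    (hρ0_meas : ∀ i, Measurable fun x => ρ0 x i)
    (hρT_meas : ∀ j, Measurable fun y => ρT y j)
    (hρ0_fin : ∀ x i, ρ0 x i ≠ ∞) (hρT_fin : ∀ y j, ρT y j ≠ ∞)
    (φ0 φT φhat0 φhatT : Euc d → S → ℝ≥0∞)
    (hφT_fin : ∀ y j, φT y j ≠ ∞) (hφhat0_fin : ∀ x i, φhat0 x i ≠ ∞)
    -- (1) φ⁰(x,i) = ∑_j ∫ p_{ij}(x,y) φᵀ(y,j) dy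
    (h1 : ∀ (x : Euc d) (i : S), φ0 x i = ∑ j, ∫⁻ y, p i j x y * φT y j ∂volume)
    -- (2) φ̂ᵀ(y,j) = ∑_i ∫ p_{ij}(x,y) φ̂⁰(x,i) dx
    (h2 : ∀ (y : Euc d) (j : S), φhatT y j = ∑ i, ∫⁻ x, p i j x y * φhat0 x i ∂volume)
    -- (3) ρ₀ = φ⁰ φ̂⁰ and (4) ρ_T = φᵀ φ̂ᵀ
    (h3 : ∀ (x : Euc d) (i : S), ρ0 x i = φ0 x i * φhat0 x i)
    (h4 : ∀ (y : Euc d) (j : S), ρT y j = φT y j * φhatT y j)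
    -- φ⁰ and φ̂ᵀ take values in (0,∞)
    (hφ0_pos : ∀ x i, 0 < φ0 x i) (hφ0_fin : ∀ x i, φ0 x i ≠ ∞)
    (hφhatT_pos : ∀ y j, 0 < φhatT y j) (hφhatT_fin : ∀ y j, φhatT y j ≠ ∞) :
    Cmap p ρ0 ρT φhatT = φhatT ∧ ETmap p ρT (Dmap φhatT) = φ0 := by

  have hET : ETmap p ρT (Dmap φhatT) = φ0 := by
    funext x i
    have : ∀ j y, p i j x y * ρT y j * (φhatT y j)⁻¹ = p i j x y * φT y j := by
      intro j y
      rw [h4, ← mul_assoc, mul_assoc (p i j x y * φT y j),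
        ENNReal.mul_inv_cancel (hφhatT_pos y j).ne' (hφhatT_fin y j), mul_one]
    simp only [ETmap, Dmap, this, h1]
  refine ⟨?_, hET⟩
  funext y j
  show E0map p ρ0 (Dmap (ETmap p ρT (Dmap φhatT))) y j = φhatT y j
  rw [hET]
  have : ∀ i x, p i j x y * ρ0 x i * (φ0 x i)⁻¹ = p i j x y * φhat0 x i := by
    intro i x
    rw [h3, mul_comm (φ0 x i), ← mul_assoc, mul_assoc (p i j x y * φhat0 x i),
      ENNReal.mul_inv_cancel (hφ0_pos x i).ne' (hφ0_fin x i), mul_one]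
  simp only [E0map, Dmap, this, h2]
end
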